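/- Let R = k[[x,y]]/(y²) for a field k and n a positive integer. The trace ideal of the ideal Iₙ = (xⁿ, y), viewed as an R-module, equals (xⁿ, y), and the trace ideal of the ideal (y) equals (y). -/

import Mathlib

/-- The trace ideal of an `R`-module `M`: the sum of the images of all `R`-linear maps
`M → R`. -/
def traceIdeal (R : Type*) [CommRing R] (M : Type*) [AddCommGroup M] [Module R M] :
    Ideal R :=
  ⨆ f : M →ₗ[R] R, LinearMap.range f

/-- The ring `R = k⟦x,y⟧/(y²)`. -/
noncomputable abbrev Ainf (k : Type*) [Field k] : Type _ :=
  MvPowerSeries (Fin 2) k ⧸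
    Ideal.span {(MvPowerSeries.X 1 : MvPowerSeries (Fin 2) k) ^ 2}

/-- The image of `x` in `R = k⟦x,y⟧/(y²)`. -/
noncomputable def xA (k : Type*) [Field k] : Ainf k :=
  Ideal.Quotient.mk _ (MvPowerSeries.X 0 : MvPowerSeries (Fin 2) k)

/-- The image of `y` in `R = k⟦x,y⟧/(y²)`. -/
noncomputable def yA (k : Type*) [Field k] : Ainf k :=
  Ideal.Quotient.mk _ (MvPowerSeries.X 1 : MvPowerSeries (Fin 2) k)

lemma Y_ne_zero (k : Type*) [Field k] :
    (MvPowerSeries.X 1 : MvPowerSeries (Fin 2) k) ≠ 0 := by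
  intro h
  have := congrArg (MvPowerSeries.coeff (R := k) (Finsupp.single (1 : Fin 2) 1)) h
  simp [MvPowerSeries.coeff_X] at this

lemma yA_sq (k : Type*) [Field k] : yA k * yA k = 0 := by
  rw [yA, ← map_mul, Ideal.Quotient.eq_zero_iff_mem, ← sq]
  exact Ideal.subset_span rfl

/-- Annihilator of `y` in `k⟦x,y⟧/(y²)` is `(y)`. -/
lemma ann_y (k : Type*) [Field k] {z : Ainf k} (h : yA k * z = 0) :
    z ∈ Ideal.span {yA k} := by
  obtain ⟨p, rfl⟩ := Ideal.Quotient.mk_surjective z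
  rw [yA, ← map_mul, Ideal.Quotient.eq_zero_iff_mem, Ideal.mem_span_singleton] at h
  obtain ⟨q, hq⟩ := h
  have hp : p = MvPowerSeries.X 1 * q := by
    apply mul_left_cancel₀ (Y_ne_zero k)
    rw [hq]; ring
  rw [Ideal.mem_span_singleton]
  exact ⟨Ideal.Quotient.mk _ q, by rw [yA, ← map_mul, ← hp]⟩

set_option maxHeartbeats 2000000 in
set_option synthInstance.maxHeartbeats 400000 in
/-- Let `R = k⟦x,y⟧/(y²)` and `n` a positive integer. The trace ideal of
the ideal `Iₙ = (xⁿ, y)` (viewed as an `R`-module) equals `(xⁿ, y)`, and the trace ideal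
of the ideal `(y)` equals `(y)`. -/
theorem traceIdeal_In_and_y
    (k : Type*) [Field k] (n : ℕ) (hn : 0 < n) :
    traceIdeal (Ainf k) (Ideal.span {(xA k) ^ n, yA k} : Ideal (Ainf k))
        = Ideal.span {(xA k) ^ n, yA k} ∧
      traceIdeal (Ainf k) (Ideal.span {yA k} : Ideal (Ainf k)) = Ideal.span {yA k} := by
  constructor
  · -- trace ideal of (xⁿ, y)
    set I : Ideal (Ainf k) := Ideal.span {(xA k) ^ n, yA k} with hI
    apply le_antisymm
    · apply iSup_le
      intro f
      rintro _ ⟨⟨z, hz⟩, rfl⟩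
      -- basic elements of I
      have hxmem : (xA k) ^ n ∈ I := Ideal.subset_span (Set.mem_insert _ _)
      have hymem : yA k ∈ I := Ideal.subset_span (Set.mem_insert_of_mem _ rfl)
      set u : I := ⟨(xA k) ^ n, hxmem⟩
      set v : I := ⟨yA k, hymem⟩
      have hyI : Ideal.span {yA k} ≤ I := by
        rw [Ideal.span_le]; intro t ht; rw [Set.mem_singleton_iff] at ht; rw [ht]; exact hymem
      -- y * f v = 0
      have hv0 : yA k * f v = 0 := by
        have hvv : yA k • v = 0 := Subtype.ext (by
          show yA k • yA k = 0
          rw [smul_eq_mul, yA_sq])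
        have h1 := map_smul f (yA k) v
        rw [hvv, map_zero] at h1
        rw [← smul_eq_mul]
        exact h1.symm
      obtain ⟨c, hc⟩ := Ideal.mem_span_singleton.mp (ann_y k hv0)
      -- y * f u = xⁿ * f v
      have hrel : yA k * f u = (xA k) ^ n * f v := by
        have huv : yA k • u = (xA k) ^ n • v := Subtype.ext (by
          show yA k • (xA k) ^ n = (xA k) ^ n • yA k
          rw [smul_eq_mul, smul_eq_mul, mul_comm])
        have h1 := map_smul f (yA k) u
        rw [huv, map_smul] at h1
        rw [← smul_eq_mul, ← smul_eq_mul]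
        exact h1.symm
      have hu : f u ∈ I := by
        have h0 : yA k * (f u - (xA k) ^ n * c) = 0 := by
          rw [mul_sub, hrel, hc]; ring
        have h1 : f u - (xA k) ^ n * c ∈ I := hyI (ann_y k h0)
        have h2 : (xA k) ^ n * c ∈ I := I.mul_mem_right c hxmem
        have := I.add_mem h2 h1
        simpa using this
      have hv : f v ∈ I := by rw [hc]; exact I.mul_mem_right c hymem
      -- decompose z
      obtain ⟨a, b, hab⟩ := Ideal.mem_span_pair.mp hz
      have hzab : (⟨z, hz⟩ : I) = a • u + b • v := by
        apply Subtype.ext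
        show z = a • (xA k) ^ n + b • yA k
        rw [smul_eq_mul, smul_eq_mul, ← hab]
      rw [hzab, map_add, map_smul, map_smul, smul_eq_mul, smul_eq_mul]
      exact I.add_mem (I.mul_mem_left a hu) (I.mul_mem_left b hv)
    · exact le_iSup_of_le (I.subtype) (by rw [Submodule.range_subtype])
  · -- trace ideal of (y)
    set I : Ideal (Ainf k) := Ideal.span {yA k} with hI
    apply le_antisymm
    · apply iSup_le
      intro f
      rintro _ ⟨⟨z, hz⟩, rfl⟩
      have hymem : yA k ∈ I := Ideal.subset_span rfl
      set v : I := ⟨yA k, hymem⟩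
      have hv0 : yA k * f v = 0 := by
        have hvv : yA k • v = 0 := Subtype.ext (by
          show yA k • yA k = 0
          rw [smul_eq_mul, yA_sq])
        have h1 := map_smul f (yA k) v
        rw [hvv, map_zero] at h1
        rw [← smul_eq_mul]
        exact h1.symm
      have hv : f v ∈ I := ann_y k hv0
      obtain ⟨c, hc⟩ := Ideal.mem_span_singleton.mp hz
      have hzc : (⟨z, hz⟩ : I) = c • v := by
        apply Subtype.ext
        show z = c • yA k
        rw [smul_eq_mul, hc, mul_comm]
      rw [hzc, map_smul, smul_eq_mul]
      exact I.mul_mem_left c hv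
    · exact le_iSup_of_le (I.subtype) (by rw [Submodule.range_subtype])
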